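/- arXiv:2301.01584 — 2 statements merged into one kernel-verified Lean document; each statement's English description precedes it below -/
import Mathlib

section
/- Let Ω ⊆ ℝ^n be a bounded open set with closure K and frontier ∂Ω, let a_1,…,a_r : K → ℝ be nonnegative continuous functions and w : K → ℝ^r continuous. Suppose ξ, ξ′ : [0,∞) × K → ℝ^r are continuous on [0,∞) × K and C² on (0,∞) × Ω (jointly in (t,x)), both satisfy the heat equation ∂_t ζ(t,x) − Δ_x ζ(t,x) + Σ_{j=1}^r a_j(x) e^{⟨v_j,ζ(t,x)⟩} v_j − w(x) = 0 on (0,∞) × Ω, and suppose ξ(0,·) = ξ′(0,·) on K and ξ(t,·) = ξ′(t,·) on ∂Ω for every t ≥ 0. Then ξ = ξ′ on [0,∞) × K. (Uniqueness of the solution of the heat equation with Dirichlet boundary condition, the first step of the proof of Theorem 1.1, in the Euclidean-domain setting.) -/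
open scoped RealInnerProductSpace

/-- The standard basis `u_1, …, u_r` of `ℝ^r`. -/
noncomputable def stdU {r : ℕ} (j : Fin r) : EuclideanSpace ℝ (Fin r) :=
  EuclideanSpace.single j 1

/-- The vectors `v_j = u_{j+1} - u_j` (`j = 1, …, r-1`), `v_r = u_1 - u_r`. -/
noncomputable def stdV {r : ℕ} (j : Fin r) : EuclideanSpace ℝ (Fin r) :=
  stdU (⟨(j.val + 1) % r, Nat.mod_lt _ j.pos⟩ : Fin r) - stdU j

/-- The Euclidean Laplacian `Δf = Σ_i ∂²f/∂x_i²` (componentwise for vector-valued `f`). -/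
noncomputable def lap {n : ℕ} {F : Type*} [NormedAddCommGroup F] [NormedSpace ℝ F]
    (f : EuclideanSpace ℝ (Fin n) → F) (x : EuclideanSpace ℝ (Fin n)) : F :=
  ∑ i : Fin n, iteratedFDeriv ℝ 2 f x (fun _ => EuclideanSpace.single i 1)

open Filter Set Topology

/-! The difference `ζ = ξ - ξ'` satisfies `⟪ζ, ∂ₜζ⟫ ≤ ⟪ζ, Δζ⟫` in the interior, because the drift
`ζ ↦ ∑ aⱼ exp ⟪vⱼ, ζ⟫ • vⱼ` is monotone (it is the gradient of a convex function). If `‖ζ‖² - ε t`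
attained its maximum over `[0, T] × closure Ω` at an interior point with `t > 0`, then there
`2 ⟪ζ, ∂ₜζ⟫ ≥ ε > 0` (a one-sided condition in time), while `⟪ζ, Δζ⟫ ≤ 0` because along every line
`(‖ζ‖²)'' = 2 ⟪ζ, ζ''⟫ + 2 ‖ζ'‖² ≤ 0`. So the maximum lies on the parabolic boundary, where
`ζ = 0`; hence `‖ζ‖² ≤ ε t` for every `ε > 0`. -/

theorem HasDerivAt.nonneg_of_isMaxOn_Icc {f : ℝ → ℝ} {c a b : ℝ} (hf : HasDerivAt f c b)
    (hmax : IsMaxOn f (Icc a b) b) (hab : a < b) : 0 ≤ c := by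
  have hcone : a - b ∈ posTangentConeAt (Icc a b) b :=
    sub_mem_posTangentConeAt_of_segment_subset (by rw [segment_symm, segment_eq_Icc hab.le])
  have h := hmax.localize.hasFDerivWithinAt_nonpos hf.hasFDerivAt.hasFDerivWithinAt hcone
  simp only [ContinuousLinearMap.toSpanSingleton_apply, smul_eq_mul] at h
  nlinarith

theorem IsLocalMax.deriv_deriv_nonpos {g : ℝ → ℝ} {x : ℝ} (hmax : IsLocalMax g x)
    (hg : ContinuousAt g x) : deriv (deriv g) x ≤ 0 := by
  -- Otherwise `x` is also a local minimum, so `g` is locally constant.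
  by_contra! hpos
  have hmin := isLocalMin_of_deriv_deriv_pos hpos hmax.deriv_eq_zero hg
  have hconst : g =ᶠ[𝓝 x] fun _ => g x :=
    (hmax.and hmin).mono fun y hy => le_antisymm hy.1 hy.2
  have hderiv : deriv g =ᶠ[𝓝 x] fun _ => 0 :=
    hconst.eventuallyEq_nhds.mono fun y hy => by simp [hy.deriv_eq]
  simp [hderiv.deriv_eq] at hpos

section Line

variable {E F : Type*} [NormedAddCommGroup E] [NormedSpace ℝ E] [NormedAddCommGroup F]
  [NormedSpace ℝ F] {f : E → F} {x : E}

theorem hasDerivAt_add_smul (x v : E) (s : ℝ) : HasDerivAt (fun s : ℝ => x + s • v) v s := by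
  simpa using ((hasDerivAt_id s).smul_const v).const_add x

theorem ContDiffAt.eventually_hasDerivAt_comp_add_smul (hf : ContDiffAt ℝ 1 f x) (v : E) :
    ∀ᶠ s in 𝓝 (0 : ℝ), HasDerivAt (fun s => f (x + s • v)) (fderiv ℝ f (x + s • v) v) s := by
  have hline : Tendsto (fun s : ℝ => x + s • v) (𝓝 0) (𝓝 x) := by
    simpa using (hasDerivAt_add_smul x v 0).continuousAt.tendsto
  filter_upwards [hline.eventually (hf.eventually (by simp))] with s hs
  exact (hs.differentiableAt one_ne_zero).hasFDerivAt.comp_hasDerivAt s (hasDerivAt_add_smul x v s)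

theorem ContDiffAt.hasDerivAt_fderiv_add_smul (hf : ContDiffAt ℝ 2 f x) (v : E) :
    HasDerivAt (fun s : ℝ => fderiv ℝ f (x + s • v) v) (iteratedFDeriv ℝ 2 f x (fun _ => v)) 0 := by
  have hD : HasFDerivAt (fderiv ℝ f) (fderiv ℝ (fderiv ℝ f) x) (x + (0 : ℝ) • v) := by
    simpa using ((hf.fderiv_right (m := 1) (by norm_num)).differentiableAt one_ne_zero).hasFDerivAt
  rw [iteratedFDeriv_two_apply]
  exact (ContinuousLinearMap.apply ℝ F v).hasFDerivAt.comp_hasDerivAt 0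
    (hD.comp_hasDerivAt 0 (hasDerivAt_add_smul x v 0))

end Line

section Slices

variable {E G : Type*} [NormedAddCommGroup E] [NormedSpace ℝ E] [NormedAddCommGroup G]
  [NormedSpace ℝ G] {m : WithTop ℕ∞} {Z : ℝ → E → G} {t : ℝ} {x : E}

theorem ContDiffAt.comp_prodMk_const (hZ : ContDiffAt ℝ m (fun p : ℝ × E => Z p.1 p.2) (t, x)) :
    ContDiffAt ℝ m (fun s => Z s x) t :=
  hZ.comp t (contDiffAt_id.prodMk contDiffAt_const)

theorem ContDiffAt.comp_const_prodMk (hZ : ContDiffAt ℝ m (fun p : ℝ × E => Z p.1 p.2) (t, x)) :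
    ContDiffAt ℝ m (Z t) x :=
  hZ.comp x (contDiffAt_const.prodMk contDiffAt_id)

end Slices

section SecondDerivative

variable {E F : Type*} [NormedAddCommGroup E] [NormedSpace ℝ E] [NormedAddCommGroup F]
  [InnerProductSpace ℝ F] {f : E → F} {x : E}

theorem IsLocalMax.inner_iteratedFDeriv_two_nonpos (hmax : IsLocalMax (fun y => ‖f y‖ ^ 2) x)
    (hf : ContDiffAt ℝ 2 f x) (v : E) : ⟪f x, iteratedFDeriv ℝ 2 f x (fun _ => v)⟫ ≤ 0 := by
  -- At `s = 0`, `(‖f (x + s • v)‖²)'' = 2 (⟪f x, D²f x (v, v)⟫ + ‖Df x v‖²)`.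
  have hγ := (hf.of_le one_le_two).eventually_hasDerivAt_comp_add_smul v
  have hγ0 : HasDerivAt (fun s : ℝ => f (x + s • v)) (fderiv ℝ f x v) 0 := by
    simpa using hγ.self_of_nhds
  have hdg : deriv (fun s : ℝ => ‖f (x + s • v)‖ ^ 2) =ᶠ[𝓝 0]
      fun s => 2 * ⟪f (x + s • v), fderiv ℝ f (x + s • v) v⟫ :=
    hγ.mono fun s hs => hs.norm_sq.deriv
  have hdg' := ((hγ0.inner ℝ (hf.hasDerivAt_fderiv_add_smul v)).const_mul 2).deriv
  have hline : ContinuousAt (fun s : ℝ => x + s • v) 0 := (hasDerivAt_add_smul x v 0).continuousAt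
  have hmax' : IsLocalMax (fun s : ℝ => ‖f (x + s • v)‖ ^ 2) 0 :=
    IsLocalMax.comp_continuous (f := fun y => ‖f y‖ ^ 2) (by simpa using hmax) hline
  have h2 := hmax'.deriv_deriv_nonpos (hγ0.continuousAt.norm.pow 2)
  rw [hdg.deriv_eq, hdg'] at h2
  simp only [zero_smul, add_zero] at h2
  nlinarith [real_inner_self_nonneg (x := fderiv ℝ f x v)]

end SecondDerivative

section Laplacian

variable {n : ℕ} {F : Type*} [NormedAddCommGroup F] [InnerProductSpace ℝ F]
  {f g : EuclideanSpace ℝ (Fin n) → F} {x : EuclideanSpace ℝ (Fin n)}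

theorem IsLocalMax.inner_lap_nonpos (hmax : IsLocalMax (fun y => ‖f y‖ ^ 2) x)
    (hf : ContDiffAt ℝ 2 f x) : ⟪f x, lap f x⟫ ≤ 0 := by
  rw [lap, inner_sum]
  exact Finset.sum_nonpos fun i _ => hmax.inner_iteratedFDeriv_two_nonpos hf _

theorem lap_sub (hf : ContDiffAt ℝ 2 f x) (hg : ContDiffAt ℝ 2 g x) :
    lap (fun y => f y - g y) x = lap f x - lap g x := by
  simp only [lap, ← Finset.sum_sub_distrib, ← sub_apply,
    ← iteratedFDeriv_sub_apply hf hg]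
  rfl

end Laplacian

theorem inner_sub_sum_smul_sub_nonneg {ι E : Type*} [Fintype ι] [NormedAddCommGroup E]
    [InnerProductSpace ℝ E] {h : ℝ → ℝ} (hh : Monotone h) {a : ι → ℝ} (ha : ∀ j, 0 ≤ a j)
    (v : ι → E) (ζ ζ' : E) :
    0 ≤ ⟪ζ - ζ', ∑ j, (a j * h ⟪v j, ζ⟫) • v j - ∑ j, (a j * h ⟪v j, ζ'⟫) • v j⟫ := by
  rw [← Finset.sum_sub_distrib, inner_sum]
  refine Finset.sum_nonneg fun j _ => ?_
  rw [← sub_smul, real_inner_smul_right, inner_sub_left, real_inner_comm (v j) ζ,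
    real_inner_comm (v j) ζ']
  have := mul_nonneg (ha j) ((hh.monovary monotone_id).sub_mul_sub_nonneg ⟪v j, ζ'⟫ ⟪v j, ζ⟫)
  simp only [id] at this
  linarith

theorem nonpos_of_forall_not_isMaxOn_sub_mul {X : Type*} [TopologicalSpace X] {K U : Set X}
    (hK : IsCompact K) {φ : ℝ × X → ℝ} (hφ : ContinuousOn φ (Ici 0 ×ˢ K))
    (hbdry : ∀ t ≥ 0, ∀ x ∈ K, t = 0 ∨ x ∉ U → φ (t, x) ≤ 0)
    (hint : ∀ ε > 0, ∀ T, ∀ t ∈ Ioc 0 T, ∀ x ∈ U,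
      ¬ IsMaxOn (fun p => φ p - ε * p.1) (Icc 0 T ×ˢ K) (t, x)) :
    ∀ t ≥ 0, ∀ x ∈ K, φ (t, x) ≤ 0 := by
  intro t ht x hx
  by_contra! hpos
  have ht0 : 0 < t := ht.lt_of_ne <| by
    rintro rfl
    exact hpos.not_ge (hbdry 0 le_rfl x hx (Or.inl rfl))
  -- The penalty `ε * t` is then half of `φ (t, x)`, which rules out a boundary maximum.
  set ε := φ (t, x) / (2 * t)
  have hε : 0 < ε := by positivity
  have hψ : ContinuousOn (fun p : ℝ × X => φ p - ε * p.1) (Icc 0 t ×ˢ K) :=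
    (hφ.mono (prod_mono Icc_subset_Ici_self le_rfl)).sub (by fun_prop)
  have htx : (t, x) ∈ Icc 0 t ×ˢ K := ⟨⟨ht, le_rfl⟩, hx⟩
  obtain ⟨⟨t₀, x₀⟩, ⟨ht₀, hx₀⟩, hmax⟩ := (isCompact_Icc.prod hK).exists_isMaxOn ⟨_, htx⟩ hψ
  have hbd : t₀ = 0 ∨ x₀ ∉ U := by
    by_contra! h
    exact hint ε hε t t₀ ⟨ht₀.1.lt_of_ne' h.1, ht₀.2⟩ x₀ h.2 hmax
  have h1 := hbdry t₀ ht₀.1 x₀ hx₀ hbd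
  have h2 : φ (t, x) - ε * t ≤ φ (t₀, x₀) - ε * t₀ := hmax htx
  have h3 : ε * t = φ (t, x) / 2 := by simp only [ε]; field_simp
  nlinarith [mul_nonneg hε.le ht₀.1]

section HeatFlow

variable {n : ℕ} {F : Type*} [NormedAddCommGroup F] [InnerProductSpace ℝ F]

theorem not_isMaxOn_norm_sq_sub_mul {Z : ℝ → EuclideanSpace ℝ (Fin n) → F}
    {s : Set (EuclideanSpace ℝ (Fin n))} {ε T t : ℝ} {x : EuclideanSpace ℝ (Fin n)}
    (hε : 0 < ε) (ht : t ∈ Ioc 0 T) (hs : s ∈ 𝓝 x)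
    (hZ : ContDiffAt ℝ 2 (fun p : ℝ × _ => Z p.1 p.2) (t, x))
    (hsub : ⟪Z t x, deriv (fun τ => Z τ x) t⟫ ≤ ⟪Z t x, lap (Z t) x⟫) :
    ¬ IsMaxOn (fun p : ℝ × _ => ‖Z p.1 p.2‖ ^ 2 - ε * p.1) (Icc 0 T ×ˢ s) (t, x) := by
  intro hmax
  have hx := mem_of_mem_nhds hs
  have htime : HasDerivAt (fun τ => ‖Z τ x‖ ^ 2 - ε * τ)
      (2 * ⟪Z t x, deriv (fun τ => Z τ x) t⟫ - ε) t := by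
    simpa only [mul_one] using
      (hZ.comp_prodMk_const.differentiableAt two_ne_zero).hasDerivAt.norm_sq.fun_sub
        ((hasDerivAt_id' t).const_mul ε)
  have hdt := htime.nonneg_of_isMaxOn_Icc
    (fun τ hτ => hmax (show (τ, x) ∈ Icc 0 T ×ˢ s from ⟨⟨hτ.1, hτ.2.trans ht.2⟩, hx⟩)) ht.1
  have hspace : IsLocalMax (fun y => ‖Z t y‖ ^ 2) x :=
    IsMaxOn.isLocalMax (fun y hy => by
      simpa using hmax (show (t, y) ∈ Icc 0 T ×ˢ s from ⟨⟨ht.1.le, ht.2⟩, hy⟩)) hs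
  have hdx := hspace.inner_lap_nonpos hZ.comp_const_prodMk
  linarith

theorem inner_deriv_sub_le_inner_lap_sub {ι : Type*} [Fintype ι]
    {ξ ξ' : ℝ → EuclideanSpace ℝ (Fin n) → F} {t : ℝ} {x : EuclideanSpace ℝ (Fin n)}
    {a : ι → ℝ} {v : ι → F} {w : F}
    (hξ : ContDiffAt ℝ 2 (fun p : ℝ × _ => ξ p.1 p.2) (t, x))
    (hξ' : ContDiffAt ℝ 2 (fun p : ℝ × _ => ξ' p.1 p.2) (t, x)) (ha : ∀ j, 0 ≤ a j)
    (heq : deriv (fun s => ξ s x) t - lap (ξ t) x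
        + ∑ j, (a j * Real.exp ⟪v j, ξ t x⟫) • v j - w = 0)
    (heq' : deriv (fun s => ξ' s x) t - lap (ξ' t) x
        + ∑ j, (a j * Real.exp ⟪v j, ξ' t x⟫) • v j - w = 0) :
    ⟪ξ t x - ξ' t x, deriv (fun s => ξ s x - ξ' s x) t⟫
      ≤ ⟪ξ t x - ξ' t x, lap (fun y => ξ t y - ξ' t y) x⟫ := by
  rw [deriv_fun_sub (hξ.comp_prodMk_const.differentiableAt two_ne_zero)
      (hξ'.comp_prodMk_const.differentiableAt two_ne_zero),
    lap_sub hξ.comp_const_prodMk hξ'.comp_const_prodMk]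
  have hdiff : deriv (fun s => ξ s x) t - deriv (fun s => ξ' s x) t
      = (lap (ξ t) x - lap (ξ' t) x) - (∑ j, (a j * Real.exp ⟪v j, ξ t x⟫) • v j
        - ∑ j, (a j * Real.exp ⟪v j, ξ' t x⟫) • v j) := by
    linear_combination (norm := module) heq - heq'
  rw [hdiff, inner_sub_right]
  linarith [inner_sub_sum_smul_sub_nonneg Real.exp_monotone ha v (ξ t x) (ξ' t x)]

end HeatFlow

theorem heat_flow_uniqueness_general (n r : ℕ)
    (Ω : Set (EuclideanSpace ℝ (Fin n))) (hΩo : IsOpen Ω) (hΩb : Bornology.IsBounded Ω)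
    (a : Fin r → EuclideanSpace ℝ (Fin n) → ℝ)
    (ha_nonneg : ∀ j, ∀ x ∈ closure Ω, 0 ≤ a j x)
    (w : EuclideanSpace ℝ (Fin n) → EuclideanSpace ℝ (Fin r))
    (ξ ξ' : ℝ → EuclideanSpace ℝ (Fin n) → EuclideanSpace ℝ (Fin r))
    (hξc : ContinuousOn (fun p : ℝ × EuclideanSpace ℝ (Fin n) => ξ p.1 p.2)
      (Set.Ici 0 ×ˢ closure Ω))
    (hξ'c : ContinuousOn (fun p : ℝ × EuclideanSpace ℝ (Fin n) => ξ' p.1 p.2)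
      (Set.Ici 0 ×ˢ closure Ω))
    (hξ : ContDiffOn ℝ 2 (fun p : ℝ × EuclideanSpace ℝ (Fin n) => ξ p.1 p.2)
      (Set.Ioi 0 ×ˢ Ω))
    (hξ' : ContDiffOn ℝ 2 (fun p : ℝ × EuclideanSpace ℝ (Fin n) => ξ' p.1 p.2)
      (Set.Ioi 0 ×ˢ Ω))
    (heq : ∀ t ∈ Set.Ioi (0 : ℝ), ∀ x ∈ Ω,
      deriv (fun s => ξ s x) t - lap (ξ t) x
        + ∑ j : Fin r, (a j x * Real.exp ⟪stdV j, ξ t x⟫) • stdV j - w x = 0)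
    (heq' : ∀ t ∈ Set.Ioi (0 : ℝ), ∀ x ∈ Ω,
      deriv (fun s => ξ' s x) t - lap (ξ' t) x
        + ∑ j : Fin r, (a j x * Real.exp ⟪stdV j, ξ' t x⟫) • stdV j - w x = 0)
    (hinit : ∀ x ∈ closure Ω, ξ 0 x = ξ' 0 x)
    (hbd : ∀ t : ℝ, 0 ≤ t → ∀ x ∈ frontier Ω, ξ t x = ξ' t x) :
    ∀ t : ℝ, 0 ≤ t → ∀ x ∈ closure Ω, ξ t x = ξ' t x := by
  have hnonpos := nonpos_of_forall_not_isMaxOn_sub_mul hΩb.isCompact_closure (U := Ω)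
    (φ := fun p => ‖ξ p.1 p.2 - ξ' p.1 p.2‖ ^ 2) ((hξc.sub hξ'c).norm.pow 2) ?boundary ?interior
  · intro t ht x hx
    simpa [sub_eq_zero] using hnonpos t ht x hx
  · rintro t ht x hx (rfl | hxΩ)
    · simp [hinit x hx]
    · simp [hbd t ht x (hΩo.frontier_eq ▸ ⟨hx, hxΩ⟩)]
  · intro ε hε T t ht x hx
    have hU : Ioi 0 ×ˢ Ω ∈ 𝓝 (t, x) := (isOpen_Ioi.prod hΩo).mem_nhds ⟨ht.1, hx⟩
    have hξt := hξ.contDiffAt hU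
    have hξ't := hξ'.contDiffAt hU
    exact not_isMaxOn_norm_sq_sub_mul (Z := fun t x => ξ t x - ξ' t x) hε ht
      (mem_of_superset (hΩo.mem_nhds hx) subset_closure) (hξt.sub hξ't)
      (inner_deriv_sub_le_inner_lap_sub hξt hξ't (fun j => ha_nonneg j x (subset_closure hx))
        (heq t ht.1 x hx) (heq' t ht.1 x hx))

/-- Uniqueness of the solution of the heat equation with Dirichlet boundary condition
(first step of the proof of Theorem 1.1, Euclidean-domain setting). -/
theorem heat_flow_uniqueness (n r : ℕ) (hr : 2 ≤ r)
    (Ω : Set (EuclideanSpace ℝ (Fin n))) (hΩo : IsOpen Ω) (hΩb : Bornology.IsBounded Ω)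
    (a : Fin r → EuclideanSpace ℝ (Fin n) → ℝ)
    (ha_cont : ∀ j, ContinuousOn (a j) (closure Ω))
    (ha_nonneg : ∀ j, ∀ x ∈ closure Ω, 0 ≤ a j x)
    (w : EuclideanSpace ℝ (Fin n) → EuclideanSpace ℝ (Fin r))
    (hw : ContinuousOn w (closure Ω))
    (ξ ξ' : ℝ → EuclideanSpace ℝ (Fin n) → EuclideanSpace ℝ (Fin r))
    (hξc : ContinuousOn (fun p : ℝ × EuclideanSpace ℝ (Fin n) => ξ p.1 p.2)
      (Set.Ici 0 ×ˢ closure Ω))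
    (hξ'c : ContinuousOn (fun p : ℝ × EuclideanSpace ℝ (Fin n) => ξ' p.1 p.2)
      (Set.Ici 0 ×ˢ closure Ω))
    (hξ : ContDiffOn ℝ 2 (fun p : ℝ × EuclideanSpace ℝ (Fin n) => ξ p.1 p.2)
      (Set.Ioi 0 ×ˢ Ω))
    (hξ' : ContDiffOn ℝ 2 (fun p : ℝ × EuclideanSpace ℝ (Fin n) => ξ' p.1 p.2)
      (Set.Ioi 0 ×ˢ Ω))
    (heq : ∀ t ∈ Set.Ioi (0 : ℝ), ∀ x ∈ Ω,
      deriv (fun s => ξ s x) t - lap (ξ t) x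
        + ∑ j : Fin r, (a j x * Real.exp ⟪stdV j, ξ t x⟫) • stdV j - w x = 0)
    (heq' : ∀ t ∈ Set.Ioi (0 : ℝ), ∀ x ∈ Ω,
      deriv (fun s => ξ' s x) t - lap (ξ' t) x
        + ∑ j : Fin r, (a j x * Real.exp ⟪stdV j, ξ' t x⟫) • stdV j - w x = 0)
    (hinit : ∀ x ∈ closure Ω, ξ 0 x = ξ' 0 x)
    (hbd : ∀ t : ℝ, 0 ≤ t → ∀ x ∈ frontier Ω, ξ t x = ξ' t x) :
    ∀ t : ℝ, 0 ≤ t → ∀ x ∈ closure Ω, ξ t x = ξ' t x :=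
  heat_flow_uniqueness_general n r Ω hΩo hΩb a ha_nonneg w ξ ξ' hξc hξ'c hξ hξ' heq heq' hinit hbd
end

section
/- Let Ω ⊆ ℝ^n be open, let a_1,…,a_r : Ω → ℝ be nonnegative C² functions, and let w : Ω → ℝ^r be continuous. Suppose that for each j = 1,…,r, Δ log(a_j) ≥ ⟨v_j, w⟩ holds at every point of Ω where a_j > 0. Let ξ : Ω → ℝ^r be a C² function satisfying −Δξ + Σ_{j=1}^r a_j e^{⟨v_j,ξ⟩} v_j = w on Ω. Then at every point of Ω where a_j > 0 for all j = 1,…,r, one has Δ log(Σ_{j=1}^r a_j e^{⟨v_j,ξ⟩}) ≥ ‖Σ_{j=1}^r a_j e^{⟨v_j,ξ⟩} v_j‖² / (Σ_{j=1}^r a_j e^{⟨v_j,ξ⟩}). (Euclidean-domain version of Theorem 1.4.) -/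
open scoped RealInnerProductSpace

/-!
With `g_j := log a_j + ⟨v_j, ξ⟩` one has `Σ_j a_j e^{⟨v_j,ξ⟩} = Σ_j e^{g_j}` near the point, and the
hypothesis on `a_j` together with the equation for `ξ` gives `Δ g_j ≥ ⟨v_j, V⟩`, where
`V = Σ_j a_j e^{⟨v_j,ξ⟩} v_j`. Log-sum-exp is convex, so `Δ log Σ_j e^{g_j}` dominates the
`e^{g_j}`-weighted average of the `Δ g_j`, which is at least
`Σ_j e^{g_j} ⟨v_j, V⟩ / Σ_j e^{g_j} = ‖V‖² / Σ_j e^{g_j}`.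
-/

open Real Filter Topology Laplacian InnerProductSpace

theorem lap_eq_laplacian {n : ℕ} {F : Type*} [NormedAddCommGroup F] [NormedSpace ℝ F]
    (f : EuclideanSpace ℝ (Fin n) → F) : lap f = Δ f := by
  rw [laplacian_eq_iteratedFDeriv_orthonormalBasis f (EuclideanSpace.basisFun (Fin n) ℝ)]
  ext x
  refine Finset.sum_congr rfl fun i _ => congrArg _ ?_
  ext k
  fin_cases k <;> simp

section SecondDerivative

variable {E : Type*} [NormedAddCommGroup E] [NormedSpace ℝ E]

theorem iteratedFDeriv_two_exp_comp_apply {f : E → ℝ} {x : E} (hf : ContDiffAt ℝ 2 f x)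
    (v : E) :
    iteratedFDeriv ℝ 2 (fun y => exp (f y)) x ![v, v]
      = exp (f x) * (iteratedFDeriv ℝ 2 f x ![v, v] + fderiv ℝ f x v ^ 2) := by
  have hderiv :
      fderiv ℝ (fun y => exp (f y)) =ᶠ[𝓝 x] fun y => exp (f y) • fderiv ℝ f y := by
    filter_upwards [hf.eventually (by simp)] with y hy
    exact fderiv_exp (hy.differentiableAt two_ne_zero)
  have hf' : HasFDerivAt (fderiv ℝ f) (fderiv ℝ (fderiv ℝ f) x) x :=
    ((hf.fderiv_right (m := 1) le_rfl).differentiableAt one_ne_zero).hasFDerivAt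
  rw [iteratedFDeriv_two_apply, hderiv.fderiv_eq, iteratedFDeriv_two_apply,
    ((hf.differentiableAt two_ne_zero).hasFDerivAt.exp.fun_smul hf').fderiv]
  simp only [Matrix.cons_val_zero, Matrix.cons_val_one, add_apply,
    smul_apply, ContinuousLinearMap.smulRight_apply, smul_eq_mul]
  ring

end SecondDerivative

section LogSumExp

variable {E ι : Type*} [NormedAddCommGroup E] [NormedSpace ℝ E] [Fintype ι] [Nonempty ι]
  {g : ι → E → ℝ} {x : E}

theorem sum_exp_mul_iteratedFDeriv_two_div_le (hg : ∀ j, ContDiffAt ℝ 2 (g j) x) (v : E) :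
    (∑ j, exp (g j x) * iteratedFDeriv ℝ 2 (g j) x ![v, v]) / ∑ j, exp (g j x)
      ≤ iteratedFDeriv ℝ 2 (fun y => log (∑ j, exp (g j y))) x ![v, v] := by
  set S : E → ℝ := fun y => ∑ j, exp (g j y)
  set L : E → ℝ := fun y => log (S y)
  have hS_pos : ∀ y, 0 < S y := fun y =>
    Finset.sum_pos (fun j _ => exp_pos _) Finset.univ_nonempty
  have hexp_L : (fun y => exp (L y)) = S := funext fun y => exp_log (hS_pos y)
  have hL : ContDiffAt ℝ 2 L x := (ContDiffAt.sum fun j _ => (hg j).exp).log (hS_pos x).ne'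
  -- Differentiating `exp ∘ L = S` twice writes the Hessian of `L` as the `e^{g_j}`-average of the
  -- Hessians of the `g_j` plus a variance, which is nonnegative by Cauchy–Schwarz.
  set b := fderiv ℝ L x v
  set a : ι → ℝ := fun j => fderiv ℝ (g j) x v
  have h1 : S x * b = ∑ j, exp (g j x) * a j := by
    have hS' : HasFDerivAt S (∑ j, exp (g j x) • fderiv ℝ (g j) x) x :=
      HasFDerivAt.fun_sum fun j _ => ((hg j).differentiableAt two_ne_zero).hasFDerivAt.exp
    have hexp_L' := (hL.differentiableAt two_ne_zero).hasFDerivAt.exp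
    rw [hexp_L, congrFun hexp_L x] at hexp_L'
    simpa using congrArg (· v) (hexp_L'.unique hS')
  have h2 : S x * (iteratedFDeriv ℝ 2 L x ![v, v] + b ^ 2)
      = ∑ j, exp (g j x) * (iteratedFDeriv ℝ 2 (g j) x ![v, v] + a j ^ 2) := by
    calc S x * (iteratedFDeriv ℝ 2 L x ![v, v] + b ^ 2)
        = iteratedFDeriv ℝ 2 (fun y => exp (L y)) x ![v, v] := by
          rw [iteratedFDeriv_two_exp_comp_apply hL, exp_log (hS_pos x)]
      _ = ∑ j, exp (g j x) * (iteratedFDeriv ℝ 2 (g j) x ![v, v] + a j ^ 2) := by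
          rw [hexp_L, iteratedFDeriv_fun_sum_apply fun j _ => (hg j).exp, sum_apply]
          exact Finset.sum_congr rfl fun j _ => iteratedFDeriv_two_exp_comp_apply (hg j) v
  have hCS : (∑ j, exp (g j x) * a j) ^ 2 ≤ S x * ∑ j, exp (g j x) * a j ^ 2 :=
    Finset.sum_sq_le_sum_mul_sum_of_sq_le_mul _ (fun j _ => (exp_pos _).le)
      (fun j _ => mul_nonneg (exp_pos _).le (sq_nonneg _)) fun j _ => (by ring : _ = _).le
  have hb : S x * b ^ 2 ≤ ∑ j, exp (g j x) * a j ^ 2 := by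
    refine le_of_mul_le_mul_left ?_ (hS_pos x)
    rw [← h1] at hCS
    linarith
  simp only [mul_add, Finset.sum_add_distrib] at h2
  rw [div_le_iff₀' (hS_pos x)]
  linarith

end LogSumExp

section Laplacian

variable {E : Type*} [NormedAddCommGroup E] [InnerProductSpace ℝ E] [FiniteDimensional ℝ E]
  {x : E}

theorem sum_exp_mul_laplacian_div_le_laplacian_log_sum_exp {ι : Type*} [Fintype ι] [Nonempty ι]
    {g : ι → E → ℝ} (hg : ∀ j, ContDiffAt ℝ 2 (g j) x) :
    (∑ j, exp (g j x) * Δ (g j) x) / ∑ j, exp (g j x)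
      ≤ Δ (fun y => log (∑ j, exp (g j y))) x := by
  simp only [laplacian_eq_iteratedFDeriv_stdOrthonormalBasis, Finset.mul_sum]
  rw [Finset.sum_comm, Finset.sum_div]
  exact Finset.sum_le_sum fun i _ => sum_exp_mul_iteratedFDeriv_two_div_le hg _

theorem laplacian_add_inner_apply {F : Type*} [NormedAddCommGroup F] [InnerProductSpace ℝ F]
    {h : E → ℝ} {ξ : E → F} (hh : ContDiffAt ℝ 2 h x) (hξ : ContDiffAt ℝ 2 ξ x) (v : F) :
    Δ (fun y => h y + ⟪v, ξ y⟫) x = Δ h x + ⟪v, Δ ξ x⟫ :=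
  (hh.laplacian_add (hξ.continuousLinearMap_comp (innerSL ℝ v))).trans
    (congrArg _ (hξ.laplacian_CLM_comp_left (l := innerSL ℝ v)))

end Laplacian

theorem energy_density_estimate_general (n r : ℕ) (hr : 2 ≤ r)
    (Ω : Set (EuclideanSpace ℝ (Fin n))) (hΩ : IsOpen Ω)
    (a : Fin r → EuclideanSpace ℝ (Fin n) → ℝ)
    (ha_C2 : ∀ j, ContDiffOn ℝ 2 (a j) Ω)
    (w : EuclideanSpace ℝ (Fin n) → EuclideanSpace ℝ (Fin r))
    (ha_sub : ∀ j : Fin r, ∀ x ∈ Ω, 0 < a j x →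
      ⟪stdV j, w x⟫ ≤ lap (fun y => Real.log (a j y)) x)
    (ξ : EuclideanSpace ℝ (Fin n) → EuclideanSpace ℝ (Fin r))
    (hξ : ContDiffOn ℝ 2 ξ Ω)
    (heq : ∀ x ∈ Ω, -lap ξ x + ∑ j : Fin r, (a j x * Real.exp ⟪stdV j, ξ x⟫) • stdV j = w x) :
    ∀ x ∈ Ω, (∀ j : Fin r, 0 < a j x) →
      ‖∑ j : Fin r, (a j x * Real.exp ⟪stdV j, ξ x⟫) • stdV j‖ ^ 2
          / (∑ j : Fin r, a j x * Real.exp ⟪stdV j, ξ x⟫)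
        ≤ lap (fun y => Real.log (∑ j : Fin r, a j y * Real.exp ⟪stdV j, ξ y⟫)) x := by
  intro x hx ha_pos
  simp only [lap_eq_laplacian] at ha_sub heq ⊢
  have : Nonempty (Fin r) := ⟨⟨0, by omega⟩⟩
  have hΩx : Ω ∈ 𝓝 x := hΩ.mem_nhds hx
  have ha : ∀ j, ContDiffAt ℝ 2 (a j) x := fun j => (ha_C2 j).contDiffAt hΩx
  have ha_pos_near : ∀ᶠ y in 𝓝 x, ∀ j, 0 < a j y :=
    eventually_all.2 fun j => (ha j).continuousAt.eventually (lt_mem_nhds (ha_pos j))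
  set g : Fin r → EuclideanSpace ℝ (Fin n) → ℝ := fun j y => log (a j y) + ⟪stdV j, ξ y⟫
  have hexp_g : ∀ y, (∀ j, 0 < a j y) → ∀ j, exp (g j y) = a j y * exp ⟪stdV j, ξ y⟫ :=
    fun y hy j => by rw [exp_add, exp_log (hy j)]
  have hlog_a : ∀ j, ContDiffAt ℝ 2 (fun y => log (a j y)) x := fun j =>
    (ha j).log (ha_pos j).ne'
  set V := ∑ j, (a j x * exp ⟪stdV j, ξ x⟫) • stdV j
  have hV : V = w x + Δ ξ x := by rw [← heq x hx]; abel
  have hg : ∀ j, ⟪stdV j, V⟫ ≤ Δ (g j) x := fun j => by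
    rw [laplacian_add_inner_apply (hlog_a j) (hξ.contDiffAt hΩx), hV, inner_add_right]
    linarith [ha_sub j x hx (ha_pos j)]
  calc ‖V‖ ^ 2 / ∑ j, a j x * exp ⟪stdV j, ξ x⟫
      = (∑ j, exp (g j x) * ⟪stdV j, V⟫) / ∑ j, exp (g j x) := by
        rw [← real_inner_self_eq_norm_sq]
        simp only [hexp_g x ha_pos, V, sum_inner, real_inner_smul_left]
    _ ≤ (∑ j, exp (g j x) * Δ (g j) x) / ∑ j, exp (g j x) := by
        gcongr with j
        exact hg j
    _ ≤ Δ (fun y => log (∑ j, exp (g j y))) x :=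
      sum_exp_mul_laplacian_div_le_laplacian_log_sum_exp fun j =>
        (hlog_a j).add (contDiffAt_const.inner ℝ (hξ.contDiffAt hΩx))
    _ = Δ (fun y => log (∑ j, a j y * exp ⟪stdV j, ξ y⟫)) x :=
      (laplacian_congr_nhds <| ha_pos_near.mono fun y hy => by simp only [hexp_g y hy]).eq_of_nhds

/-- Euclidean-domain version of Theorem 1.4: if `Δ log a_j ≥ ⟨v_j, w⟩` wherever `a_j > 0`
and `ξ` is a `C²` solution of `−Δξ + Σ_j a_j e^{⟨v_j,ξ⟩} v_j = w`, then wherever all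
`a_j > 0`,
`Δ log(Σ_j a_j e^{⟨v_j,ξ⟩}) ≥ ‖Σ_j a_j e^{⟨v_j,ξ⟩} v_j‖² / (Σ_j a_j e^{⟨v_j,ξ⟩})`. -/
theorem energy_density_estimate (n r : ℕ) (hr : 2 ≤ r)
    (Ω : Set (EuclideanSpace ℝ (Fin n))) (hΩ : IsOpen Ω)
    (a : Fin r → EuclideanSpace ℝ (Fin n) → ℝ)
    (ha_C2 : ∀ j, ContDiffOn ℝ 2 (a j) Ω) (ha_nonneg : ∀ j, ∀ x ∈ Ω, 0 ≤ a j x)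
    (w : EuclideanSpace ℝ (Fin n) → EuclideanSpace ℝ (Fin r)) (hw : ContinuousOn w Ω)
    (ha_sub : ∀ j : Fin r, ∀ x ∈ Ω, 0 < a j x →
      ⟪stdV j, w x⟫ ≤ lap (fun y => Real.log (a j y)) x)
    (ξ : EuclideanSpace ℝ (Fin n) → EuclideanSpace ℝ (Fin r))
    (hξ : ContDiffOn ℝ 2 ξ Ω)
    (heq : ∀ x ∈ Ω, -lap ξ x + ∑ j : Fin r, (a j x * Real.exp ⟪stdV j, ξ x⟫) • stdV j = w x) :
    ∀ x ∈ Ω, (∀ j : Fin r, 0 < a j x) →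
      ‖∑ j : Fin r, (a j x * Real.exp ⟪stdV j, ξ x⟫) • stdV j‖ ^ 2
          / (∑ j : Fin r, a j x * Real.exp ⟪stdV j, ξ x⟫)
        ≤ lap (fun y => Real.log (∑ j : Fin r, a j y * Real.exp ⟪stdV j, ξ y⟫)) x :=
  energy_density_estimate_general n r hr Ω hΩ a ha_C2 w ha_sub ξ hξ heq
end
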